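/- Let D be an m×m real irreducible matrix with d_ii ≥ 0, d_ij ≤ 0 for i ≠ j, and ∑_j d_ij ≥ 0 for every i (row sums only nonnegative). Then there exists a vector Λ ∈ R^m with Λ_i > 0 for all i and Dᵀ Λ ≥ 0 componentwise. -/

import Mathlib

/-!
Any nonnegative `Λ ≠ 0` with `Λᵀ D ≥ 0` is strictly positive: at a zero `Λ_j`, an edge `i → j`
of the irreducible pattern with `Λ_i > 0` would make `(Λᵀ D)_j` negative. Such a `Λ` exists:
if all row sums vanish, `D 1 = 0` makes `D` singular, and for a left null vector `v` the vector
`|v|` is again one: `|v|ᵀ D ≤ 0` because `D` is a Z-matrix, while its entries sum to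
`∑ᵢ |vᵢ| ∑ⱼ dᵢⱼ = 0`. Otherwise a maximum principle (the set where a right null vector attains a
positive maximum is closed under the edges of `D`, and on it the row sums vanish) shows that `D`
is nonsingular, and the solution of `Λᵀ D = 1` is nonnegative, since summing `(Λᵀ D)_j` over
`{j | Λ_j < 0}` gives a nonpositive number.
-/

def MatIrreducible {m : ℕ} (D : Matrix (Fin m) (Fin m) ℝ) : Prop :=
  ∀ I : Finset (Fin m), I.Nonempty → I ≠ Finset.univ → ∃ i ∈ I, ∃ j, j ∉ I ∧ D i j ≠ 0

open Finset Matrix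

section ZMatrix

variable {n : Type*} {D : Matrix n n ℝ}

theorem sum_row_le_zero_of_notMem (hoff : ∀ i j, i ≠ j → D i j ≤ 0) {S : Finset n} {i : n}
    (hi : i ∉ S) : ∑ j ∈ S, D i j ≤ 0 :=
  sum_nonpos fun j hj => hoff i j fun h => hi (h ▸ hj)

variable [Fintype n]

theorem sum_vecMul_apply (w : n → ℝ) (S : Finset n) :
    ∑ j ∈ S, (w ᵥ* D) j = ∑ i, w i * ∑ j ∈ S, D i j := by
  simp only [vecMul, dotProduct, mul_sum]
  exact sum_comm

theorem sum_row_nonneg_of_mem (hoff : ∀ i j, i ≠ j → D i j ≤ 0) (hrow : ∀ i, 0 ≤ ∑ j, D i j)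
    {S : Finset n} {i : n} (hi : i ∈ S) : 0 ≤ ∑ j ∈ S, D i j := by
  classical
  have hcompl : ∑ j ∈ Sᶜ, D i j ≤ 0 := sum_row_le_zero_of_notMem hoff (by simpa using hi)
  linarith [sum_add_sum_compl S (D i), hrow i]

theorem nonneg_of_vecMul_pos (hoff : ∀ i j, i ≠ j → D i j ≤ 0) (hrow : ∀ i, 0 ≤ ∑ j, D i j)
    {x : n → ℝ} (hx : ∀ j, 0 < (x ᵥ* D) j) : 0 ≤ x := by
  classical
  intro j₀
  by_contra! hj₀
  set S := univ.filter fun j => x j < 0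
  have hpos : 0 < ∑ j ∈ S, (x ᵥ* D) j := sum_pos (fun j _ => hx j) ⟨j₀, by simpa [S] using hj₀⟩
  have hnonpos : ∑ i, x i * ∑ j ∈ S, D i j ≤ 0 := sum_nonpos fun i _ => by
    by_cases hi : i ∈ S
    · exact mul_nonpos_of_nonpos_of_nonneg (mem_filter.1 hi).2.le
        (sum_row_nonneg_of_mem hoff hrow hi)
    · exact mul_nonpos_of_nonneg_of_nonpos (by simpa [S] using hi)
        (sum_row_le_zero_of_notMem hoff hi)
  linarith [sum_vecMul_apply (D := D) x S]

theorem vecMul_abs_le_abs_vecMul [DecidableEq n] (hoff : ∀ i j, i ≠ j → D i j ≤ 0)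
    (v : n → ℝ) (j : n) : (|v| ᵥ* D) j ≤ |(v ᵥ* D) j| := by
  have hdiag : |v j| * D j j ≤ |v j * D j j| := by
    rw [abs_mul]
    exact mul_le_mul_of_nonneg_left (le_abs_self _) (abs_nonneg _)
  have hoffdiag : |∑ i ∈ {j}ᶜ, v i * D i j| ≤ -∑ i ∈ {j}ᶜ, |v i| * D i j := by
    rw [← sum_neg_distrib]
    refine (abs_sum_le_sum_abs _ _).trans (sum_le_sum fun i hi => ?_)
    rw [abs_mul, abs_of_nonpos (hoff i j (by simpa using hi)), mul_neg]
  have htriangle := abs_sub_abs_le_abs_sub (v j * D j j) (-∑ i ∈ {j}ᶜ, v i * D i j)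
  simp only [vecMul, dotProduct, Pi.abs_apply]
  rw [Fintype.sum_eq_add_sum_compl j, Fintype.sum_eq_add_sum_compl j]
  rw [abs_neg, sub_neg_eq_add] at htriangle
  linarith

theorem abs_vecMul_eq_zero [DecidableEq n] (hoff : ∀ i j, i ≠ j → D i j ≤ 0)
    (hsum : ∀ i, ∑ j, D i j = 0) {v : n → ℝ} (hv : v ᵥ* D = 0) : |v| ᵥ* D = 0 := by
  have hle : ∀ j ∈ univ, (|v| ᵥ* D) j ≤ 0 := fun j _ => by
    simpa [hv] using vecMul_abs_le_abs_vecMul hoff v j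
  have htotal : ∑ j, (|v| ᵥ* D) j = 0 := by simp [sum_vecMul_apply, hsum]
  ext j
  exact (sum_eq_zero_iff_of_nonpos hle).1 htotal j (mem_univ j)

theorem exists_nonneg_ne_zero_vecMul_eq_zero [Nonempty n] [DecidableEq n]
    (hoff : ∀ i j, i ≠ j → D i j ≤ 0) (hsum : ∀ i, ∑ j, D i j = 0) :
    ∃ x : n → ℝ, 0 ≤ x ∧ x ≠ 0 ∧ x ᵥ* D = 0 := by
  have hdet : D.det = 0 :=
    exists_mulVec_eq_zero_iff.1 ⟨1, one_ne_zero, by ext i; simp [mulVec, dotProduct, hsum]⟩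
  obtain ⟨v, hv0, hv⟩ := exists_vecMul_eq_zero_iff.2 hdet
  exact ⟨|v|, abs_nonneg v, by simpa using hv0, abs_vecMul_eq_zero hoff hsum hv⟩

end ZMatrix

namespace MatIrreducible

variable {m : ℕ} {D : Matrix (Fin m) (Fin m) ℝ}

theorem eq_univ_of_forall_apply_eq_zero (hD : MatIrreducible D) {I : Finset (Fin m)}
    (hI : I.Nonempty) (hclosed : ∀ i ∈ I, ∀ j ∉ I, D i j = 0) : I = univ := by
  by_contra hne
  obtain ⟨i, hi, j, hj, hij⟩ := hD I hI hne
  exact hij (hclosed i hi j hj)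

theorem pos_of_nonneg_of_vecMul_nonneg (hD : MatIrreducible D)
    (hoff : ∀ i j, i ≠ j → D i j ≤ 0) {x : Fin m → ℝ} (hx : 0 ≤ x) (hx0 : x ≠ 0)
    (hxD : 0 ≤ x ᵥ* D) (j : Fin m) : 0 < x j := by
  set I := univ.filter fun i => 0 < x i
  have hI : I.Nonempty := by
    obtain ⟨i, hi⟩ := Function.ne_iff.1 hx0
    exact ⟨i, by simpa [I] using (hx i).lt_of_ne' hi⟩
  have hclosed : ∀ i ∈ I, ∀ j ∉ I, D i j = 0 := by
    intro i hi j hj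
    have hxj : x j = 0 := le_antisymm (by simpa [I] using hj) (hx j)
    have hterms : ∀ k ∈ univ, x k * D k j ≤ 0 := fun k _ => by
      by_cases hk : k = j
      · simp [hk, hxj]
      · exact mul_nonpos_of_nonneg_of_nonpos (hx k) (hoff k j hk)
    have hsum : ∑ k, x k * D k j = 0 := le_antisymm (sum_nonpos hterms) (hxD j)
    have hij := (sum_eq_zero_iff_of_nonpos hterms).1 hsum i (mem_univ i)
    exact (mul_eq_zero.1 hij).resolve_left (mem_filter.1 hi).2.ne'
  have hj : j ∈ I := eq_univ_iff_forall.1 (hD.eq_univ_of_forall_apply_eq_zero hI hclosed) j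
  exact (mem_filter.1 hj).2

theorem sum_row_eq_zero_of_mulVec_eq_zero (hD : MatIrreducible D)
    (hoff : ∀ i j, i ≠ j → D i j ≤ 0) (hrow : ∀ i, 0 ≤ ∑ j, D i j) {v : Fin m → ℝ}
    (hv : D *ᵥ v = 0) {k : Fin m} (hk : 0 < v k) (i : Fin m) : ∑ j, D i j = 0 := by
  obtain ⟨i₀, -, hmax⟩ := exists_max_image univ v ⟨k, mem_univ k⟩
  set M := v i₀
  have hM : 0 < M := hk.trans_le (hmax k (mem_univ k))
  have hat_max : ∀ i, v i = M → M * ∑ j, D i j = 0 ∧ ∀ j, D i j * (v j - M) = 0 := by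
    intro i hi
    have hterms : ∀ j ∈ univ, 0 ≤ D i j * (v j - M) := fun j _ => by
      by_cases hij : i = j
      · simp [← hij, hi]
      · exact mul_nonneg_of_nonpos_of_nonpos (hoff i j hij) (sub_nonpos.2 (hmax j (mem_univ j)))
    have hsplit : M * ∑ j, D i j + ∑ j, D i j * (v j - M) = 0 := by
      calc M * ∑ j, D i j + ∑ j, D i j * (v j - M) = ∑ j, D i j * v j := by
            rw [mul_sum, ← sum_add_distrib]
            exact sum_congr rfl fun j _ => by ring
        _ = 0 := congrFun hv i
    have hrowM := mul_nonneg hM.le (hrow i)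
    have htermsum := sum_nonneg hterms
    exact ⟨by linarith, fun j => (sum_eq_zero_iff_of_nonneg hterms).1 (by linarith) j (mem_univ j)⟩
  set I := univ.filter fun i => v i = M
  have hI : I = univ := hD.eq_univ_of_forall_apply_eq_zero ⟨i₀, by simp [I, M]⟩
    fun i hi j hj => (mul_eq_zero.1 ((hat_max i (mem_filter.1 hi).2).2 j)).resolve_right
      (sub_ne_zero.2 (by simpa [I] using hj))
  have hi : v i = M := (mem_filter.1 (eq_univ_iff_forall.1 hI i)).2
  exact (mul_eq_zero.1 (hat_max i hi).1).resolve_left hM.ne'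

theorem det_ne_zero (hD : MatIrreducible D) (hoff : ∀ i j, i ≠ j → D i j ≤ 0)
    (hrow : ∀ i, 0 ≤ ∑ j, D i j) (hsum : ¬∀ i, ∑ j, D i j = 0) : D.det ≠ 0 := by
  intro hdet
  obtain ⟨v, hv0, hv⟩ := exists_mulVec_eq_zero_iff.2 hdet
  obtain ⟨k, hk⟩ := Function.ne_iff.1 hv0
  rcases hk.lt_or_gt with hneg | hpos
  · exact hsum (hD.sum_row_eq_zero_of_mulVec_eq_zero hoff hrow (v := -v)
      (by rw [mulVec_neg, hv, neg_zero]) (k := k) (by simpa using hneg))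
  · exact hsum (hD.sum_row_eq_zero_of_mulVec_eq_zero hoff hrow hv hpos)

end MatIrreducible

theorem exists_positive_left_supersolution_general {m : ℕ}
    (D : Matrix (Fin m) (Fin m) ℝ)
    (hoff : ∀ i j, i ≠ j → D i j ≤ 0)
    (hrow : ∀ i, 0 ≤ ∑ j, D i j)
    (hirr : MatIrreducible D) :
    ∃ Λ : Fin m → ℝ, (∀ i, 0 < Λ i) ∧ ∀ j, 0 ≤ D.transpose.mulVec Λ j := by
  simp only [mulVec_transpose]
  rcases isEmpty_or_nonempty (Fin m) with hm | hm
  · exact ⟨0, isEmptyElim, isEmptyElim⟩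
  obtain ⟨Λ, hΛ, hΛ0, hΛD⟩ : ∃ Λ : Fin m → ℝ, 0 ≤ Λ ∧ Λ ≠ 0 ∧ 0 ≤ Λ ᵥ* D := by
    by_cases hsum : ∀ i, ∑ j, D i j = 0
    · obtain ⟨Λ, hΛ, hΛ0, hΛD⟩ := exists_nonneg_ne_zero_vecMul_eq_zero hoff hsum
      exact ⟨Λ, hΛ, hΛ0, hΛD.ge⟩
    · have hunit : IsUnit D.det := (hirr.det_ne_zero hoff hrow hsum).isUnit
      obtain ⟨Λ, hΛD⟩ : ∃ Λ : Fin m → ℝ, Λ ᵥ* D = 1 :=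
        ⟨1 ᵥ* D⁻¹, by rw [vecMul_vecMul, nonsing_inv_mul _ hunit, vecMul_one]⟩
      refine ⟨Λ, nonneg_of_vecMul_pos hoff hrow fun j => by simp [hΛD], ?_, hΛD ▸ zero_le_one⟩
      rintro rfl
      simp at hΛD
  exact ⟨Λ, hirr.pos_of_nonneg_of_vecMul_nonneg hoff hΛ hΛ0 hΛD, hΛD⟩

/-- An irreducible matrix with nonnegative diagonal, nonpositive off-diagonal entries and
nonnegative row sums admits a strictly positive vector `Λ` with `Dᵀ Λ ≥ 0` componentwise. -/
theorem exists_positive_left_supersolution {m : ℕ}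
    (D : Matrix (Fin m) (Fin m) ℝ)
    (hdiag : ∀ i, 0 ≤ D i i)
    (hoff : ∀ i j, i ≠ j → D i j ≤ 0)
    (hrow : ∀ i, 0 ≤ ∑ j, D i j)
    (hirr : MatIrreducible D) :
    ∃ Λ : Fin m → ℝ, (∀ i, 0 < Λ i) ∧ ∀ j, 0 ≤ D.transpose.mulVec Λ j :=
  exists_positive_left_supersolution_general D hoff hrow hirr
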